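/- arXiv:2509.17198 — 2 statements merged into one kernel-verified Lean document; each statement's English description precedes it below -/
import Mathlib

section
/- Certificate of global optimality: suppose ŷ ∈ ℝⁿ satisfies gᵢ(ŷ) = 0 for all i, and there exists λ ∈ ℝ^m with H(λ) ⪰ 0 and H(λ)·[1, ŷᵀ]ᵀ = 0, where H(λ) = [[c₀ - f(ŷ), l₀ᵀ],[l₀, F]] + Σᵢ λᵢ [[cᵢ, lᵢᵀ],[lᵢ, Gᵢ]]. Then ŷ is a global minimizer of f over the feasible set {y : gᵢ(y) = 0 for all i}. -/
open Matrix

/-- The symmetric block matrix `[[c, lᵀ],[l, M]]` indexed by `Unit ⊕ Fin n`. -/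
noncomputable def blockM {n : ℕ} (c : ℝ) (l : Fin n → ℝ) (M : Matrix (Fin n) (Fin n) ℝ) :
    Matrix (Unit ⊕ Fin n) (Unit ⊕ Fin n) ℝ :=
  Matrix.fromBlocks (Matrix.of fun (_ : Unit) (_ : Unit) => c)
    (Matrix.of fun (_ : Unit) j => l j) (Matrix.of fun i (_ : Unit) => l i) M

/-!
Write `z = (1, y)`. The quadratic form of `[[c, lᵀ],[l, M]]` at `z` is the quadratic function
`yᵀ M y + 2 lᵀ y + c`, so `zᵀ H(λ) z = f(y) - f(ŷ) + ∑ᵢ λᵢ gᵢ(y)`, which is `f(y) - f(ŷ)` for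
feasible `y`. Positive semidefiniteness of `H(λ)` makes this nonnegative.
-/

theorem sumElim_one_dotProduct_blockM_mulVec {n : ℕ} (c : ℝ) (l : Fin n → ℝ)
    (M : Matrix (Fin n) (Fin n) ℝ) (y : Fin n → ℝ) :
    Sum.elim (fun _ => 1) y ⬝ᵥ (blockM c l M *ᵥ Sum.elim (fun _ => 1) y)
      = y ⬝ᵥ (M *ᵥ y) + 2 * (l ⬝ᵥ y) + c := by
  simp only [blockM, fromBlocks_mulVec, sumElim_dotProduct_sumElim, Sum.elim_comp_inl,
    Sum.elim_comp_inr]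
  simp only [dotProduct, mulVec, of_apply, Finset.univ_unique, Finset.sum_singleton,
    Pi.add_apply, one_mul, mul_one, mul_add, Finset.sum_add_distrib]
  simp only [mul_comm (y _) (l _)]
  ring

theorem dotProduct_add_sum_smul_mulVec {ι κ : Type*} [Fintype κ] (s : Finset ι)
    (A : Matrix κ κ ℝ) (B : ι → Matrix κ κ ℝ) (lam : ι → ℝ) (z : κ → ℝ) :
    z ⬝ᵥ ((A + ∑ i ∈ s, lam i • B i) *ᵥ z)
      = z ⬝ᵥ (A *ᵥ z) + ∑ i ∈ s, lam i * (z ⬝ᵥ (B i *ᵥ z)) := by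
  simp only [add_mulVec, sum_mulVec, dotProduct_add, dotProduct_sum, smul_mulVec,
    dotProduct_smul, smul_eq_mul]

theorem dotProduct_mulVec_nonneg_of_posSemidef_add_sum_smul {ι κ : Type*} [Fintype κ]
    (s : Finset ι) (A : Matrix κ κ ℝ) (B : ι → Matrix κ κ ℝ) (lam : ι → ℝ)
    (hpsd : (A + ∑ i ∈ s, lam i • B i).PosSemidef) (z : κ → ℝ)
    (hz : ∀ i ∈ s, z ⬝ᵥ (B i *ᵥ z) = 0) :
    0 ≤ z ⬝ᵥ (A *ᵥ z) := by
  have h := hpsd.dotProduct_mulVec_nonneg z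
  rwa [star_trivial, dotProduct_add_sum_smul_mulVec,
    Finset.sum_eq_zero fun i hi => by rw [hz i hi, mul_zero], add_zero] at h

theorem stmt5_general {n m : ℕ}
    (F : Matrix (Fin n) (Fin n) ℝ)
    (G : Fin m → Matrix (Fin n) (Fin n) ℝ)
    (l₀ : Fin n → ℝ) (l : Fin m → Fin n → ℝ) (c₀ : ℝ) (c : Fin m → ℝ)
    (f : (Fin n → ℝ) → ℝ) (hf : ∀ y, f y = y ⬝ᵥ (F *ᵥ y) + 2 * (l₀ ⬝ᵥ y) + c₀)
    (g : Fin m → (Fin n → ℝ) → ℝ)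
    (hg : ∀ i y, g i y = y ⬝ᵥ (G i *ᵥ y) + 2 * (l i ⬝ᵥ y) + c i)
    (yhat : Fin n → ℝ)
    (lam : Fin m → ℝ)
    (H : Matrix (Unit ⊕ Fin n) (Unit ⊕ Fin n) ℝ)
    (hHdef : H = blockM (c₀ - f yhat) l₀ F + ∑ i, lam i • blockM (c i) (l i) (G i))
    (hHpsd : H.PosSemidef) :
    ∀ y : Fin n → ℝ, (∀ i, g i y = 0) → f yhat ≤ f y := by
  intro y hy
  rw [hHdef] at hHpsd
  have h := dotProduct_mulVec_nonneg_of_posSemidef_add_sum_smul _ _ _ _ hHpsd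
    (Sum.elim (fun _ => 1) y) fun i _ => by
      rw [sumElim_one_dotProduct_blockM_mulVec, ← hg, hy]
  rw [sumElim_one_dotProduct_blockM_mulVec] at h
  linarith [hf y]

/-- Certificate of global optimality: if `ŷ` is feasible and there is `λ` with
`H(λ) = [[c₀ - f(ŷ), l₀ᵀ],[l₀, F]] + ∑ᵢ λᵢ [[cᵢ, lᵢᵀ],[lᵢ, Gᵢ]] ⪰ 0` and
`H(λ)·[1, ŷᵀ]ᵀ = 0`, then `ŷ` is a global minimizer of `f` over the feasible set. -/
theorem stmt5 {n m : ℕ}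
    (F : Matrix (Fin n) (Fin n) ℝ) (hF : F.IsSymm)
    (G : Fin m → Matrix (Fin n) (Fin n) ℝ) (hG : ∀ i, (G i).IsSymm)
    (l₀ : Fin n → ℝ) (l : Fin m → Fin n → ℝ) (c₀ : ℝ) (c : Fin m → ℝ)
    (f : (Fin n → ℝ) → ℝ) (hf : ∀ y, f y = y ⬝ᵥ (F *ᵥ y) + 2 * (l₀ ⬝ᵥ y) + c₀)
    (g : Fin m → (Fin n → ℝ) → ℝ)
    (hg : ∀ i y, g i y = y ⬝ᵥ (G i *ᵥ y) + 2 * (l i ⬝ᵥ y) + c i)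
    (yhat : Fin n → ℝ) (hyhat : ∀ i, g i yhat = 0)
    (lam : Fin m → ℝ)
    (H : Matrix (Unit ⊕ Fin n) (Unit ⊕ Fin n) ℝ)
    (hHdef : H = blockM (c₀ - f yhat) l₀ F + ∑ i, lam i • blockM (c i) (l i) (G i))
    (hHpsd : H.PosSemidef)
    (hHker : H *ᵥ (Sum.elim (fun _ => (1 : ℝ)) yhat) = 0) :
    ∀ y : Fin n → ℝ, (∀ i, g i y = 0) → f yhat ≤ f y :=
  stmt5_general F G l₀ l c₀ c f hf g hg yhat lam H hHdef hHpsd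
end

section
/- Uniqueness under corank-1 certificate: with the setup of the previous statement, if additionally corank(H(λ)) = 1 (i.e., the kernel of H(λ) is one-dimensional, spanned by [1, ŷᵀ]ᵀ), then ŷ is the unique global minimizer of the QCQP, and the optimal solution of the Shor SDP relaxation is the rank-1 matrix [1, ŷᵀ]ᵀ[1, ŷᵀ]. -/
/-!
For a feasible `y`, evaluating the certificate `H` on `(1, y)` gives `f y - f ŷ` plus a
combination of constraint values, so `H ⪰ 0` yields `f ŷ ≤ f y`. The same computation in lifted
form says that for a feasible point `Z` of the Shor relaxation `tr (H Z)` is the objective gap.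
At an optimal `Z` it vanishes, and a vanishing trace of a product of two PSD matrices forces
`H Z = 0`. The columns of the symmetric matrix `Z` then lie in `ker H = ℝ e`, and the
normalization `Z₁₁ = 1` pins down `Z = e eᵀ`. Uniqueness of `ŷ` is the case `Z = (1, y)(1, y)ᵀ`.
-/

open Matrix

namespace Matrix

open scoped ComplexOrder

section RCLike

variable {N 𝕜 : Type*} [Fintype N] [RCLike 𝕜] {A B : Matrix N N 𝕜}

lemma trace_conjTranspose_mul_self_mul_conjTranspose_mul_self (C D : Matrix N N 𝕜) :
    (Cᴴ * C * (Dᴴ * D)).trace = ((C * Dᴴ)ᴴ * (C * Dᴴ)).trace := by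
  rw [conjTranspose_mul, conjTranspose_conjTranspose, Matrix.mul_assoc D, trace_mul_comm D]
  simp only [Matrix.mul_assoc]

lemma PosSemidef.exists_eq_conjTranspose_mul_self (hA : A.PosSemidef) :
    ∃ C : Matrix N N 𝕜, A = Cᴴ * C := by
  classical
  open scoped MatrixOrder Matrix.Norms.L2Operator in
  exact CStarAlgebra.nonneg_iff_eq_star_mul_self.mp hA.nonneg

lemma PosSemidef.trace_mul_nonneg (hA : A.PosSemidef) (hB : B.PosSemidef) :
    0 ≤ (A * B).trace := by
  obtain ⟨C, rfl⟩ := hA.exists_eq_conjTranspose_mul_self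
  obtain ⟨D, rfl⟩ := hB.exists_eq_conjTranspose_mul_self
  rw [trace_conjTranspose_mul_self_mul_conjTranspose_mul_self]
  exact (posSemidef_conjTranspose_mul_self _).trace_nonneg

lemma PosSemidef.mul_eq_zero_of_trace_mul_eq_zero (hA : A.PosSemidef) (hB : B.PosSemidef)
    (h : (A * B).trace = 0) : A * B = 0 := by
  obtain ⟨C, rfl⟩ := hA.exists_eq_conjTranspose_mul_self
  obtain ⟨D, rfl⟩ := hB.exists_eq_conjTranspose_mul_self
  rw [trace_conjTranspose_mul_self_mul_conjTranspose_mul_self,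
    trace_conjTranspose_mul_self_eq_zero_iff] at h
  rw [Matrix.mul_assoc, ← Matrix.mul_assoc C, h, Matrix.zero_mul, Matrix.mul_zero]

end RCLike

variable {N R : Type*} [Fintype N]

lemma eq_vecMulVec_of_mul_eq_zero [CommRing R] {H Z : Matrix N N R} {e : N → R} {i₀ : N}
    (hker : ∀ v, H *ᵥ v = 0 → ∃ t : R, v = t • e) (hHZ : H * Z = 0) (hZ : Z.IsSymm)
    (he : e i₀ = 1) (hZ₀ : Z i₀ i₀ = 1) : Z = vecMulVec e e := by
  have hcol : ∀ a, ∃ t : R, (fun i => Z i a) = t • e := fun a =>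
    hker _ (funext fun i => congrFun (congrFun hHZ i) a)
  have hcol₀ : ∀ i, Z i i₀ = e i := by
    obtain ⟨t, ht⟩ := hcol i₀
    obtain rfl : t = 1 := by simpa [he, hZ₀] using (congrFun ht i₀).symm
    simpa using congrFun ht
  ext i a
  obtain ⟨t, ht⟩ := hcol a
  obtain rfl : t = e a := by simpa [hZ.apply a i₀, hcol₀, he] using (congrFun ht i₀).symm
  simpa [vecMulVec_apply, mul_comm] using congrFun ht i

lemma trace_mul_vecMulVec_self [CommSemiring R] (M : Matrix N N R) (v : N → R) :
    (M * vecMulVec v v).trace = v ⬝ᵥ (M *ᵥ v) := by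
  rw [mul_vecMulVec, trace_vecMulVec, dotProduct_comm]

end Matrix

section ShorRelaxation

variable {n m : ℕ}

lemma trace_blockM_mul_blockM (c : ℝ) (l : Fin n → ℝ) (M : Matrix (Fin n) (Fin n) ℝ)
    (d : ℝ) (y : Fin n → ℝ) (Y : Matrix (Fin n) (Fin n) ℝ) :
    (blockM c l M * blockM d y Y).trace = (M * Y).trace + 2 * (l ⬝ᵥ y) + c * d := by
  rw [blockM, blockM, fromBlocks_multiply]
  simp only [trace, diag_apply, Fintype.sum_sum_type, Finset.univ_unique, PUnit.default_eq_unit,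
    fromBlocks_apply₁₁, fromBlocks_apply₂₂, Matrix.add_apply, Matrix.mul_apply, of_apply,
    Finset.sum_const, Finset.card_singleton, one_smul, smul_add, Finset.sum_add_distrib, dotProduct]
  ring

lemma blockM_one_vecMulVec (y : Fin n → ℝ) :
    blockM 1 y (vecMulVec y y) =
      vecMulVec (Sum.elim (fun _ => 1) y) (Sum.elim (fun _ => 1) y) := by
  ext (i | i) (j | j) <;> simp [blockM, vecMulVec_apply]

lemma posSemidef_blockM_one_vecMulVec (y : Fin n → ℝ) :
    (blockM 1 y (vecMulVec y y)).PosSemidef := by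
  rw [blockM_one_vecMulVec]
  simpa using posSemidef_vecMulVec_self_star (Sum.elim (fun _ => (1 : ℝ)) y)

noncomputable def certificateMatrix (F : Matrix (Fin n) (Fin n) ℝ)
    (G : Fin m → Matrix (Fin n) (Fin n) ℝ) (l₀ : Fin n → ℝ) (l : Fin m → Fin n → ℝ) (c₀ : ℝ)
    (c : Fin m → ℝ) (lam : Fin m → ℝ) (fhat : ℝ) : Matrix (Unit ⊕ Fin n) (Unit ⊕ Fin n) ℝ :=
  blockM (c₀ - fhat) l₀ F + ∑ i, lam i • blockM (c i) (l i) (G i)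

variable {F : Matrix (Fin n) (Fin n) ℝ} {G : Fin m → Matrix (Fin n) (Fin n) ℝ}
  {l₀ : Fin n → ℝ} {l : Fin m → Fin n → ℝ} {c₀ : ℝ} {c : Fin m → ℝ} {lam : Fin m → ℝ} {fhat : ℝ}
  {y : Fin n → ℝ} {Y : Matrix (Fin n) (Fin n) ℝ}

lemma trace_certificateMatrix_mul_of_feasible
    (hfeas : ∀ i, (G i * Y).trace + 2 * (l i ⬝ᵥ y) + c i = 0) :
    (certificateMatrix F G l₀ l c₀ c lam fhat * blockM 1 y Y).trace =
      (F * Y).trace + 2 * (l₀ ⬝ᵥ y) + c₀ - fhat := by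
  simp only [certificateMatrix, Matrix.add_mul, Finset.sum_mul, Matrix.smul_mul, trace_add,
    trace_sum, trace_smul, trace_blockM_mul_blockM, mul_one, hfeas, smul_zero,
    Finset.sum_const_zero]
  ring

lemma le_objective_of_shor_feasible (hH : (certificateMatrix F G l₀ l c₀ c lam fhat).PosSemidef)
    (hfeas : ∀ i, (G i * Y).trace + 2 * (l i ⬝ᵥ y) + c i = 0)
    (hZ : (blockM 1 y Y).PosSemidef) :
    fhat ≤ (F * Y).trace + 2 * (l₀ ⬝ᵥ y) + c₀ := by
  have := hH.trace_mul_nonneg hZ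
  rw [trace_certificateMatrix_mul_of_feasible hfeas] at this
  linarith

lemma blockM_eq_vecMulVec_of_objective_le
    (hH : (certificateMatrix F G l₀ l c₀ c lam fhat).PosSemidef) {e : Unit ⊕ Fin n → ℝ}
    (hker : ∀ v, certificateMatrix F G l₀ l c₀ c lam fhat *ᵥ v = 0 → ∃ t : ℝ, v = t • e)
    (he : e (Sum.inl ()) = 1)
    (hfeas : ∀ i, (G i * Y).trace + 2 * (l i ⬝ᵥ y) + c i = 0) (hZ : (blockM 1 y Y).PosSemidef)
    (hobj : (F * Y).trace + 2 * (l₀ ⬝ᵥ y) + c₀ ≤ fhat) :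
    blockM 1 y Y = vecMulVec e e := by
  have htrace : (certificateMatrix F G l₀ l c₀ c lam fhat * blockM 1 y Y).trace = 0 :=
    le_antisymm (by rw [trace_certificateMatrix_mul_of_feasible hfeas]; linarith)
      (hH.trace_mul_nonneg hZ)
  exact eq_vecMulVec_of_mul_eq_zero hker (hH.mul_eq_zero_of_trace_mul_eq_zero hZ htrace)
    hZ.isHermitian (by simpa using he) (by simp [blockM])

end ShorRelaxation

theorem stmt6_general {n m : ℕ}
    (F : Matrix (Fin n) (Fin n) ℝ)
    (G : Fin m → Matrix (Fin n) (Fin n) ℝ)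
    (l₀ : Fin n → ℝ) (l : Fin m → Fin n → ℝ) (c₀ : ℝ) (c : Fin m → ℝ)
    (f : (Fin n → ℝ) → ℝ) (hf : ∀ y, f y = y ⬝ᵥ (F *ᵥ y) + 2 * (l₀ ⬝ᵥ y) + c₀)
    (g : Fin m → (Fin n → ℝ) → ℝ)
    (hg : ∀ i y, g i y = y ⬝ᵥ (G i *ᵥ y) + 2 * (l i ⬝ᵥ y) + c i)
    (yhat : Fin n → ℝ)
    (lam : Fin m → ℝ)
    (H : Matrix (Unit ⊕ Fin n) (Unit ⊕ Fin n) ℝ)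
    (hHdef : H = blockM (c₀ - f yhat) l₀ F + ∑ i, lam i • blockM (c i) (l i) (G i))
    (hHpsd : H.PosSemidef)
    (e : (Unit ⊕ Fin n) → ℝ) (he : e = Sum.elim (fun _ => (1 : ℝ)) yhat)
    -- corank 1: the kernel of H(λ) is spanned by `e`
    (hcorank : ∀ v : (Unit ⊕ Fin n) → ℝ, H *ᵥ v = 0 → ∃ t : ℝ, v = t • e) :
    -- ŷ is the unique global minimizer of the QCQP
    (∀ y : Fin n → ℝ, (∀ i, g i y = 0) → f yhat ≤ f y) ∧
    (∀ y : Fin n → ℝ, (∀ i, g i y = 0) → f y = f yhat → y = yhat) ∧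
    -- any optimal solution of the Shor SDP relaxation is the rank-1 matrix e eᵀ
    (∀ (Y' : Matrix (Fin n) (Fin n) ℝ) (y' : Fin n → ℝ),
      (∀ i, (G i * Y').trace + 2 * (l i ⬝ᵥ y') + c i = 0) →
      (Matrix.fromBlocks (Matrix.of fun (_ : Unit) (_ : Unit) => (1 : ℝ))
        (Matrix.of fun (_ : Unit) j => y' j) (Matrix.of fun i (_ : Unit) => y' i) Y').PosSemidef →
      (F * Y').trace + 2 * (l₀ ⬝ᵥ y') + c₀ ≤ f yhat →
      Matrix.fromBlocks (Matrix.of fun (_ : Unit) (_ : Unit) => (1 : ℝ))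
        (Matrix.of fun (_ : Unit) j => y' j) (Matrix.of fun i (_ : Unit) => y' i) Y' =
        Matrix.vecMulVec e e) := by
  subst hHdef he
  have hf_lift : ∀ y, f y = (F * vecMulVec y y).trace + 2 * (l₀ ⬝ᵥ y) + c₀ := fun y => by
    rw [hf, trace_mul_vecMulVec_self]
  have hg_lift : ∀ i y, g i y = (G i * vecMulVec y y).trace + 2 * (l i ⬝ᵥ y) + c i :=
    fun i y => by rw [hg, trace_mul_vecMulVec_self]
  refine ⟨fun y hy => ?_, fun y hy hfy => ?_, fun Y y hfeas hZ hobj => ?_⟩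
  · rw [hf_lift y]
    exact le_objective_of_shor_feasible hHpsd (fun i => hg_lift i y ▸ hy i)
      (posSemidef_blockM_one_vecMulVec y)
  · have hrank := blockM_eq_vecMulVec_of_objective_le hHpsd hcorank rfl
      (fun i => hg_lift i y ▸ hy i) (posSemidef_blockM_one_vecMulVec y) (hf_lift y ▸ hfy.le)
    rw [blockM_one_vecMulVec] at hrank
    funext j
    simpa [vecMulVec_apply] using congrFun (congrFun hrank (Sum.inr j)) (Sum.inl ())
  · exact blockM_eq_vecMulVec_of_objective_le hHpsd hcorank rfl hfeas hZ hobj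

/-- Uniqueness under a corank-1 certificate: with a PSD certificate `H(λ)` annihilating
`[1, ŷᵀ]ᵀ` whose kernel is one-dimensional, `ŷ` is the unique global minimizer of the QCQP,
and any optimal solution of the Shor SDP relaxation is the rank-1 matrix `[1,ŷᵀ]ᵀ[1,ŷᵀ]`. -/
theorem stmt6 {n m : ℕ}
    (F : Matrix (Fin n) (Fin n) ℝ) (hF : F.IsSymm)
    (G : Fin m → Matrix (Fin n) (Fin n) ℝ) (hG : ∀ i, (G i).IsSymm)
    (l₀ : Fin n → ℝ) (l : Fin m → Fin n → ℝ) (c₀ : ℝ) (c : Fin m → ℝ)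
    (f : (Fin n → ℝ) → ℝ) (hf : ∀ y, f y = y ⬝ᵥ (F *ᵥ y) + 2 * (l₀ ⬝ᵥ y) + c₀)
    (g : Fin m → (Fin n → ℝ) → ℝ)
    (hg : ∀ i y, g i y = y ⬝ᵥ (G i *ᵥ y) + 2 * (l i ⬝ᵥ y) + c i)
    (yhat : Fin n → ℝ) (hyhat : ∀ i, g i yhat = 0)
    (lam : Fin m → ℝ)
    (H : Matrix (Unit ⊕ Fin n) (Unit ⊕ Fin n) ℝ)
    (hHdef : H = blockM (c₀ - f yhat) l₀ F + ∑ i, lam i • blockM (c i) (l i) (G i))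
    (hHpsd : H.PosSemidef)
    (e : (Unit ⊕ Fin n) → ℝ) (he : e = Sum.elim (fun _ => (1 : ℝ)) yhat)
    (hHker : H *ᵥ e = 0)
    -- corank 1: the kernel of H(λ) is spanned by `e`
    (hcorank : ∀ v : (Unit ⊕ Fin n) → ℝ, H *ᵥ v = 0 → ∃ t : ℝ, v = t • e) :
    -- ŷ is the unique global minimizer of the QCQP
    (∀ y : Fin n → ℝ, (∀ i, g i y = 0) → f yhat ≤ f y) ∧
    (∀ y : Fin n → ℝ, (∀ i, g i y = 0) → f y = f yhat → y = yhat) ∧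
    -- any optimal solution of the Shor SDP relaxation is the rank-1 matrix e eᵀ
    (∀ (Y' : Matrix (Fin n) (Fin n) ℝ) (y' : Fin n → ℝ),
      (∀ i, (G i * Y').trace + 2 * (l i ⬝ᵥ y') + c i = 0) →
      (Matrix.fromBlocks (Matrix.of fun (_ : Unit) (_ : Unit) => (1 : ℝ))
        (Matrix.of fun (_ : Unit) j => y' j) (Matrix.of fun i (_ : Unit) => y' i) Y').PosSemidef →
      (F * Y').trace + 2 * (l₀ ⬝ᵥ y') + c₀ ≤ f yhat →
      Matrix.fromBlocks (Matrix.of fun (_ : Unit) (_ : Unit) => (1 : ℝ))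
        (Matrix.of fun (_ : Unit) j => y' j) (Matrix.of fun i (_ : Unit) => y' i) Y' =
        Matrix.vecMulVec e e) :=
  stmt6_general F G l₀ l c₀ c f hf g hg yhat lam H hHdef hHpsd e he hcorank
end
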